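/- Fix a finite measure μ on a measurable space W and a bounded measurable g : W → ℝ. For each λ > 0 let X_λ be a binomial random variable with parameters n_λ and p_λ where n_λ/λ² → c > 0 and p_λ/a_λ → q ∈ (0,∞) with a_λ → 0 and λ² a_λ → ∞. Then (1/(λ² a_λ)) log E[exp(s X_λ)] → c q (e^s − 1) for every s ∈ ℝ. -/

import Mathlib

/-!
The binomial MGF is `(1 + p (e^s - 1))^n`, so the scaled log-MGF equals
`(n / λ²) · log (1 + p (e^s - 1)) / a`. Since `p → 0`, `log (1 + x) ~ x` turns the second
factor into `p (e^s - 1) / a → q (e^s - 1)`.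
-/

open MeasureTheory Filter ENNReal

/-- The moment generating function `E[exp(s X)]` of a binomial random variable `X`
with parameters `n` and `p`. -/
noncomputable def binomMGF (n : ℕ) (p s : ℝ) : ℝ :=
  ∑ k ∈ Finset.range (n + 1),
    (n.choose k : ℝ) * p ^ k * (1 - p) ^ (n - k) * Real.exp (s * k)

open Asymptotics Topology

theorem binomMGF_eq_pow (n : ℕ) (p s : ℝ) :
    binomMGF n p s = (1 + p * (Real.exp s - 1)) ^ n := by
  rw [binomMGF, show 1 + p * (Real.exp s - 1) = p * Real.exp s + (1 - p) by ring, add_pow]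
  refine Finset.sum_congr rfl fun k _ => ?_
  rw [mul_pow, mul_comm s, Real.exp_nat_mul]
  ring

theorem Real.isEquivalent_log_one_add : (fun x => Real.log (1 + x)) ~[𝓝 0] id := by
  have h := hasDerivAt_iff_isLittleO_nhds_zero.mp (Real.hasDerivAt_log one_ne_zero)
  change (fun x => Real.log (1 + x) - x) =o[𝓝 0] fun x => x
  simpa [add_comm] using h

theorem tendsto_log_one_add_div {α : Type*} {l : Filter α} {u b : α → ℝ} {L : ℝ}
    (hu : Tendsto u l (𝓝 0)) (hub : Tendsto (fun x => u x / b x) l (𝓝 L)) :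
    Tendsto (fun x => Real.log (1 + u x) / b x) l (𝓝 L) :=
  ((Real.isEquivalent_log_one_add.comp_tendsto hu).div IsEquivalent.refl).tendsto_nhds_iff.mpr hub

theorem tendsto_zero_of_tendsto_div {α : Type*} {l : Filter α} {u v : α → ℝ} {L : ℝ}
    (huv : Tendsto (fun x => u x / v x) l (𝓝 L)) (hv : Tendsto v l (𝓝 0))
    (hv0 : ∀ᶠ x in l, v x ≠ 0) : Tendsto u l (𝓝 0) := by
  have h := huv.mul hv
  rw [mul_zero] at h
  refine h.congr' ?_
  filter_upwards [hv0] with x hx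
  exact div_mul_cancel₀ _ hx

theorem binomial_logMGF_limit_general (n : ℝ → ℕ) (p a : ℝ → ℝ) (c q : ℝ)
    (hn : Tendsto (fun l => (n l : ℝ) / l ^ 2) atTop (nhds c))
    (hpa : Tendsto (fun l => p l / a l) atTop (nhds q))
    (ha0 : Tendsto a atTop (nhds 0))
    (hla : Tendsto (fun l => l ^ 2 * a l) atTop atTop) :
    ∀ s : ℝ,
      Tendsto (fun l => (1 / (l ^ 2 * a l)) * Real.log (binomMGF (n l) (p l) s))
        atTop (nhds (c * q * (Real.exp s - 1))) := by
  intro s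
  have ha_ne : ∀ᶠ l in atTop, a l ≠ 0 :=
    (hla.eventually_ne_atTop 0).mono fun _ h => right_ne_zero_of_mul h
  have hp0 : Tendsto p atTop (𝓝 0) := tendsto_zero_of_tendsto_div hpa ha0 ha_ne
  have hlog : Tendsto (fun l => Real.log (1 + p l * (Real.exp s - 1)) / a l) atTop
      (𝓝 (q * (Real.exp s - 1))) :=
    tendsto_log_one_add_div (by simpa using hp0.mul_const (Real.exp s - 1))
      (by simpa only [mul_div_right_comm] using hpa.mul_const (Real.exp s - 1))
  rw [mul_assoc]
  refine (hn.mul hlog).congr' ?_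
  filter_upwards [eventually_ne_atTop 0] with l hl
  rw [binomMGF_eq_pow, Real.log_pow]
  field_simp

/-- Scaled log-MGF limit for binomial variables: if `n_λ/λ² → c`, `p_λ/a_λ → q`,
`a_λ → 0` and `λ² a_λ → ∞`, then `(1/(λ² a_λ)) log E[exp(s X_λ)] → c q (e^s − 1)`. -/
theorem binomial_logMGF_limit (n : ℝ → ℕ) (p a : ℝ → ℝ) (c q : ℝ)
    (hc : 0 < c) (hq : 0 < q)
    (hp : ∀ l, p l ∈ Set.Icc (0 : ℝ) 1)
    (hn : Tendsto (fun l => (n l : ℝ) / l ^ 2) atTop (nhds c))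
    (hpa : Tendsto (fun l => p l / a l) atTop (nhds q))
    (ha0 : Tendsto a atTop (nhds 0))
    (hla : Tendsto (fun l => l ^ 2 * a l) atTop atTop) :
    ∀ s : ℝ,
      Tendsto (fun l => (1 / (l ^ 2 * a l)) * Real.log (binomMGF (n l) (p l) s))
        atTop (nhds (c * q * (Real.exp s - 1))) :=
  binomial_logMGF_limit_general n p a c q hn hpa ha0 hla
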